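/- arXiv:1805.08753 — 2 statements merged into one kernel-verified Lean document; each statement's English description precedes it below -/
import Mathlib

section
/- Let A be a finite-dimensional K-vector space with linear Δ : A → A⊗A⊗A and linear maps α₁, α₂ : A → A. Then (A, Δ, α₁, α₂) is a weak totally hom-coassociative ternary coalgebra (i.e., (Δ⊗α₁⊗α₂)∘Δ = (α₁⊗α₂⊗Δ)∘Δ) if and only if the dual map Δ* : A*⊗A*⊗A* → A* makes (A*, Δ*, α₁*, α₂*) a weak totally hom-associative ternary algebra (i.e., Δ*(Δ*(ξ₁,ξ₂,ξ₃), α₁*(ξ₄), α₂*(ξ₅)) = Δ*(α₁*(ξ₁), α₂*(ξ₂), Δ*(ξ₃,ξ₄,ξ₅))). -/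
/-!
Pairing with a pure tensor `ξ₁ ⊗ ⋯ ⊗ ξ₅` of functionals turns the two sides of the
hom-coassociativity identity, applied to `Δ x`, into the two sides of the hom-associativity
identity for `Δ*`, evaluated at `x`. In finite dimension the pairing `(A*)^⊗5 → (A^⊗5)*` is
surjective, so these pure pairings separate the points of `A^⊗5`, which gives the converse.
-/

open TensorProduct Module

/-- `(Δ ⊗ α₁ ⊗ α₂)` reassociated to land in the right-nested 5-fold tensor power. -/
noncomputable def coassoc1 {K M : Type*} [Field K] [AddCommGroup M] [Module K M]
    (Δ : M →ₗ[K] M ⊗[K] (M ⊗[K] M)) (α₁ α₂ : M →ₗ[K] M) :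
    (M ⊗[K] (M ⊗[K] M)) →ₗ[K] (M ⊗[K] (M ⊗[K] (M ⊗[K] (M ⊗[K] M)))) :=
  (TensorProduct.map (LinearMap.id : M →ₗ[K] M)
      (TensorProduct.assoc K M M (M ⊗[K] M)).toLinearMap).comp
    ((TensorProduct.assoc K M (M ⊗[K] M) (M ⊗[K] M)).toLinearMap.comp
      (TensorProduct.map Δ (TensorProduct.map α₁ α₂)))

/-- `(α₁ ⊗ Δ ⊗ α₂)` reassociated to land in the right-nested 5-fold tensor power. -/
noncomputable def coassoc2 {K M : Type*} [Field K] [AddCommGroup M] [Module K M]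
    (Δ : M →ₗ[K] M ⊗[K] (M ⊗[K] M)) (α₁ α₂ : M →ₗ[K] M) :
    (M ⊗[K] (M ⊗[K] M)) →ₗ[K] (M ⊗[K] (M ⊗[K] (M ⊗[K] (M ⊗[K] M)))) :=
  (TensorProduct.map (LinearMap.id : M →ₗ[K] M)
      ((TensorProduct.map (LinearMap.id : M →ₗ[K] M)
          (TensorProduct.assoc K M M M).toLinearMap).comp
        (TensorProduct.assoc K M (M ⊗[K] M) M).toLinearMap)).comp
    (TensorProduct.map α₁ (TensorProduct.map Δ α₂))

/-- `(α₁ ⊗ α₂ ⊗ Δ)`. -/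
noncomputable def coassoc3 {K M : Type*} [Field K] [AddCommGroup M] [Module K M]
    (Δ : M →ₗ[K] M ⊗[K] (M ⊗[K] M)) (α₁ α₂ : M →ₗ[K] M) :
    (M ⊗[K] (M ⊗[K] M)) →ₗ[K] (M ⊗[K] (M ⊗[K] (M ⊗[K] (M ⊗[K] M)))) :=
  TensorProduct.map α₁ (TensorProduct.map α₂ Δ)

/-- The natural pairing `A* ⊗ A* ⊗ A* → (A ⊗ A ⊗ A)*`. -/
noncomputable def pair3 (K M : Type*) [Field K] [AddCommGroup M] [Module K M] :
    (Dual K M ⊗[K] (Dual K M ⊗[K] Dual K M)) →ₗ[K] Dual K (M ⊗[K] (M ⊗[K] M)) :=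
  (TensorProduct.dualDistrib K M (M ⊗[K] M)).comp
    (TensorProduct.map (LinearMap.id : Dual K M →ₗ[K] Dual K M)
      (TensorProduct.dualDistrib K M M))

lemma TensorProduct.dualDistrib_surjective (R M N : Type*) [CommRing R]
    [AddCommGroup M] [Module R M] [Module.Finite R M] [Module.Free R M]
    [AddCommGroup N] [Module R N] [Module.Finite R N] [Module.Free R N] :
    Function.Surjective (dualDistrib R M N) :=
  (dualDistribEquiv R M N).surjective

section Pairing

variable {K M : Type*} [Field K] [AddCommGroup M] [Module K M]

lemma pair3_surjective [FiniteDimensional K M] : Function.Surjective (pair3 K M) :=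
  (dualDistrib_surjective K M _).comp <|
    LinearMap.lTensor_surjective _ (dualDistrib_surjective K M M)

variable (K M) in
noncomputable def pair5 :
    (Dual K M ⊗[K] (Dual K M ⊗[K] (Dual K M ⊗[K] (Dual K M ⊗[K] Dual K M)))) →ₗ[K]
      Dual K (M ⊗[K] (M ⊗[K] (M ⊗[K] (M ⊗[K] M)))) :=
  dualDistrib K M _ ∘ₗ (dualDistrib K M _ ∘ₗ (pair3 K M).lTensor _).lTensor _

lemma pair5_surjective [FiniteDimensional K M] : Function.Surjective (pair5 K M) :=
  (dualDistrib_surjective K M _).comp <| LinearMap.lTensor_surjective _ <|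
    (dualDistrib_surjective K M _).comp (LinearMap.lTensor_surjective _ pair3_surjective)

@[simp]
lemma pair3_tmul (ξ₁ ξ₂ ξ₃ : Dual K M) (a b c : M) :
    pair3 K M (ξ₁ ⊗ₜ (ξ₂ ⊗ₜ ξ₃)) (a ⊗ₜ (b ⊗ₜ c)) = ξ₁ a * (ξ₂ b * ξ₃ c) := by
  simp [pair3, dualDistrib_apply]

@[simp]
lemma pair5_tmul (ξ₁ ξ₂ ξ₃ ξ₄ ξ₅ : Dual K M) (a b c d e : M) :
    pair5 K M (ξ₁ ⊗ₜ (ξ₂ ⊗ₜ (ξ₃ ⊗ₜ (ξ₄ ⊗ₜ ξ₅)))) (a ⊗ₜ (b ⊗ₜ (c ⊗ₜ (d ⊗ₜ e))))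
      = ξ₁ a * (ξ₂ b * (ξ₃ c * (ξ₄ d * ξ₅ e))) := by
  simp [pair5, dualDistrib_apply]

lemma eq_of_pair5_tmul_eq [FiniteDimensional K M]
    {u w : M ⊗[K] (M ⊗[K] (M ⊗[K] (M ⊗[K] M)))}
    (h : ∀ ξ₁ ξ₂ ξ₃ ξ₄ ξ₅ : Dual K M,
      pair5 K M (ξ₁ ⊗ₜ (ξ₂ ⊗ₜ (ξ₃ ⊗ₜ (ξ₄ ⊗ₜ ξ₅)))) u
        = pair5 K M (ξ₁ ⊗ₜ (ξ₂ ⊗ₜ (ξ₃ ⊗ₜ (ξ₄ ⊗ₜ ξ₅)))) w) : u = w := by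
  have h_flip : (pair5 K M).flip u = (pair5 K M).flip w := by
    ext ξ₁ ξ₂ ξ₃ ξ₄ ξ₅
    exact h ξ₁ ξ₂ ξ₃ ξ₄ ξ₅
  rw [← sub_eq_zero, ← Module.forall_dual_apply_eq_zero_iff K]
  intro φ
  obtain ⟨t, rfl⟩ := pair5_surjective φ
  rw [map_sub, sub_eq_zero]
  exact LinearMap.congr_fun h_flip t

lemma pair5_assoc_tmul (ξ₁ ξ₂ ξ₃ ξ₄ ξ₅ : Dual K M) (s : M ⊗[K] (M ⊗[K] M)) (d e : M) :
    pair5 K M (ξ₁ ⊗ₜ (ξ₂ ⊗ₜ (ξ₃ ⊗ₜ (ξ₄ ⊗ₜ ξ₅))))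
      (TensorProduct.map LinearMap.id (TensorProduct.assoc K M M (M ⊗[K] M)).toLinearMap
        (TensorProduct.assoc K M (M ⊗[K] M) (M ⊗[K] M) (s ⊗ₜ (d ⊗ₜ e))))
      = pair3 K M (ξ₁ ⊗ₜ (ξ₂ ⊗ₜ ξ₃)) s * (ξ₄ d * ξ₅ e) := by
  induction s using TensorProduct.induction_on with
  | zero => simp
  | tmul a r =>
    induction r using TensorProduct.induction_on with
    | zero => simp
    | tmul b c => simp [mul_assoc]
    | add x y hx hy => simp_all [tmul_add, add_tmul, add_mul]
  | add x y hx hy => simp_all [add_tmul, add_mul]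

lemma pair5_tmul_tmul (ξ₁ ξ₂ ξ₃ ξ₄ ξ₅ : Dual K M) (a b : M) (s : M ⊗[K] (M ⊗[K] M)) :
    pair5 K M (ξ₁ ⊗ₜ (ξ₂ ⊗ₜ (ξ₃ ⊗ₜ (ξ₄ ⊗ₜ ξ₅)))) (a ⊗ₜ (b ⊗ₜ s))
      = ξ₁ a * (ξ₂ b * pair3 K M (ξ₃ ⊗ₜ (ξ₄ ⊗ₜ ξ₅)) s) := by
  induction s using TensorProduct.induction_on with
  | zero => simp
  | tmul c r =>
    induction r using TensorProduct.induction_on with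
    | zero => simp
    | tmul d e => simp
    | add x y hx hy => simp_all [tmul_add, mul_add]
  | add x y hx hy => simp_all [tmul_add, mul_add]

lemma pair5_comp_coassoc1 (Δ : M →ₗ[K] M ⊗[K] (M ⊗[K] M)) (α₁ α₂ : M →ₗ[K] M)
    (ξ₁ ξ₂ ξ₃ ξ₄ ξ₅ : Dual K M) :
    pair5 K M (ξ₁ ⊗ₜ (ξ₂ ⊗ₜ (ξ₃ ⊗ₜ (ξ₄ ⊗ₜ ξ₅)))) ∘ₗ coassoc1 Δ α₁ α₂
      = pair3 K M (Δ.dualMap (pair3 K M (ξ₁ ⊗ₜ (ξ₂ ⊗ₜ ξ₃))) ⊗ₜ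
          (α₁.dualMap ξ₄ ⊗ₜ α₂.dualMap ξ₅)) := by
  ext a b c
  simp [coassoc1, pair5_assoc_tmul]

lemma pair5_comp_coassoc3 (Δ : M →ₗ[K] M ⊗[K] (M ⊗[K] M)) (α₁ α₂ : M →ₗ[K] M)
    (ξ₁ ξ₂ ξ₃ ξ₄ ξ₅ : Dual K M) :
    pair5 K M (ξ₁ ⊗ₜ (ξ₂ ⊗ₜ (ξ₃ ⊗ₜ (ξ₄ ⊗ₜ ξ₅)))) ∘ₗ coassoc3 Δ α₁ α₂
      = pair3 K M (α₁.dualMap ξ₁ ⊗ₜ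
          (α₂.dualMap ξ₂ ⊗ₜ Δ.dualMap (pair3 K M (ξ₃ ⊗ₜ (ξ₄ ⊗ₜ ξ₅))))) := by
  ext a b c
  simp [coassoc3, pair5_tmul_tmul]

end Pairing

/-- `(A, Δ, α₁, α₂)` is a weak totally hom-coassociative ternary coalgebra iff the
dual product `Δ*` makes `(A*, Δ*, α₁*, α₂*)` a weak totally hom-associative ternary
algebra. -/
theorem stmt9 {K A : Type*} [Field K] [AddCommGroup A] [Module K A]
    [FiniteDimensional K A]
    (Δ : A →ₗ[K] A ⊗[K] (A ⊗[K] A)) (α₁ α₂ : A →ₗ[K] A)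
    (δ : Dual K A →ₗ[K] Dual K A →ₗ[K] Dual K A →ₗ[K] Dual K A)
    (hδ : ∀ (ξ η γ : Dual K A) (x : A),
      δ ξ η γ x = pair3 K A (ξ ⊗ₜ[K] (η ⊗ₜ[K] γ)) (Δ x)) :
    (coassoc1 Δ α₁ α₂).comp Δ = (coassoc3 Δ α₁ α₂).comp Δ ↔
    (∀ ξ₁ ξ₂ ξ₃ ξ₄ ξ₅ : Dual K A,
      δ (δ ξ₁ ξ₂ ξ₃) (α₁.dualMap ξ₄) (α₂.dualMap ξ₅)
        = δ (α₁.dualMap ξ₁) (α₂.dualMap ξ₂) (δ ξ₃ ξ₄ ξ₅)) := by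
  have hδ_eq (ξ η γ : Dual K A) : δ ξ η γ = Δ.dualMap (pair3 K A (ξ ⊗ₜ (η ⊗ₜ γ))) :=
    LinearMap.ext (hδ ξ η γ)
  have pair5_hom_assoc_left (ξ₁ ξ₂ ξ₃ ξ₄ ξ₅ : Dual K A) (x : A) :
      δ (δ ξ₁ ξ₂ ξ₃) (α₁.dualMap ξ₄) (α₂.dualMap ξ₅) x
        = pair5 K A (ξ₁ ⊗ₜ (ξ₂ ⊗ₜ (ξ₃ ⊗ₜ (ξ₄ ⊗ₜ ξ₅)))) (coassoc1 Δ α₁ α₂ (Δ x)) := by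
    rw [hδ, hδ_eq, ← pair5_comp_coassoc1, LinearMap.comp_apply]
  have pair5_hom_assoc_right (ξ₁ ξ₂ ξ₃ ξ₄ ξ₅ : Dual K A) (x : A) :
      δ (α₁.dualMap ξ₁) (α₂.dualMap ξ₂) (δ ξ₃ ξ₄ ξ₅) x
        = pair5 K A (ξ₁ ⊗ₜ (ξ₂ ⊗ₜ (ξ₃ ⊗ₜ (ξ₄ ⊗ₜ ξ₅)))) (coassoc3 Δ α₁ α₂ (Δ x)) := by
    rw [hδ, hδ_eq, ← pair5_comp_coassoc3, LinearMap.comp_apply]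
  constructor
  · intro h ξ₁ ξ₂ ξ₃ ξ₄ ξ₅
    ext x
    rw [pair5_hom_assoc_left, pair5_hom_assoc_right, ← LinearMap.comp_apply (coassoc1 Δ α₁ α₂),
      h, LinearMap.comp_apply]
  · intro h
    ext x : 1
    exact eq_of_pair5_tmul_eq fun ξ₁ ξ₂ ξ₃ ξ₄ ξ₅ ↦ by
      rw [LinearMap.comp_apply, LinearMap.comp_apply, ← pair5_hom_assoc_left,
        ← pair5_hom_assoc_right, h]
end

section
/- Let T = K² with the totally associative ternary product μ (μ(e₁,e₁,e₁)=e₁, μ(e₁,e₁,e₂)=μ(e₁,e₂,e₁)=μ(e₂,e₁,e₁)=e₂, μ(e₂,e₂,e₁)=μ(e₁,e₂,e₂)=μ(e₂,e₁,e₂)=e₁+e₂, μ(e₂,e₂,e₂)=e₁+2e₂) and automorphism ρ(e₁)=e₁, ρ(e₂)=e₁−e₂. The twisted product μ̃ = ρ∘μ (so μ̃(e₁,e₁,e₁)=e₁, μ̃(e₁,e₁,e₂)=e₁−e₂, etc.) gives a totally hom-associative ternary algebra (T, μ̃, ρ, ρ) that is NOT totally associative: there exist x₁,...,x₅ ∈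 T with μ̃(μ̃(x₁,x₂,x₃),x₄,x₅) ≠ μ̃(x₁,μ̃(x₂,x₃,x₄),x₅). -/
/-!
With `e₁ = 1` and `e₂ = t`, the product `μ` is the triple product `xyz` of the commutative algebra
`K[t]/(t² - t - 1)`, hence totally associative, and `ρ` is its conjugation `t ↦ 1 - t` (the two roots
of `t² - t - 1` sum to `1`), an algebra automorphism. Twisting a totally associative product by a
multiplicative map always gives a totally hom-associative one. Total associativity fails because the
twist does not commute with itself: `μ̃(μ̃(1, t, t), t, 1) = t² ρ(t) = -t`, whereas
`μ̃(1, μ̃(t, t, t), 1) = t³ = 1 + 2t`.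
-/

def IsTotallyAssoc {α : Type*} (μ : α → α → α → α) : Prop :=
  ∀ x₁ x₂ x₃ x₄ x₅ : α,
    μ (μ x₁ x₂ x₃) x₄ x₅ = μ x₁ (μ x₂ x₃ x₄) x₅ ∧ μ x₁ (μ x₂ x₃ x₄) x₅ = μ x₁ x₂ (μ x₃ x₄ x₅)

def IsTotallyHomAssoc {α : Type*} (μ : α → α → α → α) (ρ : α → α) : Prop :=
  ∀ x₁ x₂ x₃ x₄ x₅ : α,
    μ (μ x₁ x₂ x₃) (ρ x₄) (ρ x₅) = μ (ρ x₁) (μ x₂ x₃ x₄) (ρ x₅) ∧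
      μ (ρ x₁) (μ x₂ x₃ x₄) (ρ x₅) = μ (ρ x₁) (ρ x₂) (μ x₃ x₄ x₅)

theorem isTotallyAssoc_of_assoc {α : Type*} {m : α → α → α}
    (hm : ∀ a b c, m (m a b) c = m a (m b c)) : IsTotallyAssoc fun x y z => m (m x y) z :=
  fun _ _ _ _ _ => by constructor <;> simp only [hm]

theorem IsTotallyAssoc.isTotallyHomAssoc_twist {α : Type*} {μ μt : α → α → α → α} {ρ : α → α}
    (hμ : IsTotallyAssoc μ) (hρ : ∀ x y z, ρ (μ x y z) = μ (ρ x) (ρ y) (ρ z))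
    (hμt : ∀ x y z, μt x y z = ρ (μ x y z)) : IsTotallyHomAssoc μt ρ := by
  intro x₁ x₂ x₃ x₄ x₅
  constructor <;> simp only [hμt, ← hρ, (hμ x₁ x₂ x₃ x₄ x₅).1, (hμ x₁ x₂ x₃ x₄ x₅).2]

section Golden

variable {K : Type*} [CommRing K]

/-- Multiplication in `K[t]/(t² - t - 1)` on coordinates with respect to the basis `1, t`. -/
def goldenMul (x y : K × K) : K × K :=
  (x.1 * y.1 + x.2 * y.2, x.1 * y.2 + x.2 * y.1 + x.2 * y.2)

def goldenConj (x : K × K) : K × K := (x.1 + x.2, -x.2)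

theorem goldenMul_assoc (x y z : K × K) :
    goldenMul (goldenMul x y) z = goldenMul x (goldenMul y z) := by
  ext <;> simp only [goldenMul] <;> ring

theorem goldenConj_goldenMul (x y : K × K) :
    goldenConj (goldenMul x y) = goldenMul (goldenConj x) (goldenConj y) := by
  ext <;> simp only [goldenConj, goldenMul] <;> ring

theorem eq_smul_fst_add_smul_snd (e : Fin 2 → K × K) (he0 : e 0 = (1, 0)) (he1 : e 1 = (0, 1))
    (x : K × K) : x = x.1 • e 0 + x.2 • e 1 := by
  rw [he0, he1]
  ext <;> simp

theorem linearMap_eq_goldenConj (e : Fin 2 → K × K) (he0 : e 0 = (1, 0)) (he1 : e 1 = (0, 1))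
    (ρ : (K × K) →ₗ[K] (K × K)) (hρ0 : ρ (e 0) = e 0) (hρ1 : ρ (e 1) = e 0 - e 1) (x : K × K) :
    ρ x = goldenConj x := by
  rw [eq_smul_fst_add_smul_snd e he0 he1 x, map_add, map_smul, map_smul, hρ0, hρ1, he0, he1]
  ext <;> simp [goldenConj]

theorem trilinearMap_eq_goldenMul (μ : (K × K) →ₗ[K] (K × K) →ₗ[K] (K × K) →ₗ[K] (K × K))
    (e : Fin 2 → K × K) (he0 : e 0 = (1, 0)) (he1 : e 1 = (0, 1))
    (h111 : μ (e 0) (e 0) (e 0) = e 0)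
    (h112 : μ (e 0) (e 0) (e 1) = e 1)
    (h121 : μ (e 0) (e 1) (e 0) = e 1)
    (h211 : μ (e 1) (e 0) (e 0) = e 1)
    (h221 : μ (e 1) (e 1) (e 0) = e 0 + e 1)
    (h122 : μ (e 0) (e 1) (e 1) = e 0 + e 1)
    (h212 : μ (e 1) (e 0) (e 1) = e 0 + e 1)
    (h222 : μ (e 1) (e 1) (e 1) = e 0 + (2 : K) • e 1) (x y z : K × K) :
    μ x y z = goldenMul (goldenMul x y) z := by
  conv_lhs => rw [eq_smul_fst_add_smul_snd e he0 he1 x, eq_smul_fst_add_smul_snd e he0 he1 y,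
    eq_smul_fst_add_smul_snd e he0 he1 z]
  simp only [map_add, map_smul, LinearMap.add_apply, LinearMap.smul_apply,
    h111, h112, h121, h211, h221, h122, h212, h222]
  rw [he0, he1]
  ext <;> simp [goldenMul] <;> ring

theorem exists_goldenConj_goldenMul_ne [Nontrivial K] :
    ∃ x₁ x₂ x₃ x₄ x₅ : K × K,
      goldenConj (goldenMul (goldenMul (goldenConj (goldenMul (goldenMul x₁ x₂) x₃)) x₄) x₅) ≠
        goldenConj (goldenMul (goldenMul x₁ (goldenConj (goldenMul (goldenMul x₂ x₃) x₄))) x₅) := by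
  refine ⟨(1, 0), (0, 1), (0, 1), (0, 1), (1, 0), fun h => ?_⟩
  have h₁ := congrArg Prod.fst h
  norm_num [goldenMul, goldenConj] at h₁

end Golden

theorem stmt19_general {K : Type*} [Field K]
    (μ : (K × K) →ₗ[K] (K × K) →ₗ[K] (K × K) →ₗ[K] (K × K))
    (e : Fin 2 → K × K) (he0 : e 0 = (1, 0)) (he1 : e 1 = (0, 1))
    (h111 : μ (e 0) (e 0) (e 0) = e 0)
    (h112 : μ (e 0) (e 0) (e 1) = e 1)
    (h121 : μ (e 0) (e 1) (e 0) = e 1)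
    (h211 : μ (e 1) (e 0) (e 0) = e 1)
    (h221 : μ (e 1) (e 1) (e 0) = e 0 + e 1)
    (h122 : μ (e 0) (e 1) (e 1) = e 0 + e 1)
    (h212 : μ (e 1) (e 0) (e 1) = e 0 + e 1)
    (h222 : μ (e 1) (e 1) (e 1) = e 0 + (2 : K) • e 1)
    (ρ : (K × K) →ₗ[K] (K × K))
    (hρ0 : ρ (e 0) = e 0) (hρ1 : ρ (e 1) = e 0 - e 1)
    (μt : (K × K) → (K × K) → (K × K) → (K × K))
    (hμt : ∀ x y z : K × K, μt x y z = ρ (μ x y z)) :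
    (∀ x₁ x₂ x₃ x₄ x₅ : K × K,
      μt (μt x₁ x₂ x₃) (ρ x₄) (ρ x₅) = μt (ρ x₁) (μt x₂ x₃ x₄) (ρ x₅) ∧
      μt (ρ x₁) (μt x₂ x₃ x₄) (ρ x₅) = μt (ρ x₁) (ρ x₂) (μt x₃ x₄ x₅)) ∧
    (∃ x₁ x₂ x₃ x₄ x₅ : K × K,
      μt (μt x₁ x₂ x₃) x₄ x₅ ≠ μt x₁ (μt x₂ x₃ x₄) x₅) := by
  have hρ := linearMap_eq_goldenConj e he0 he1 ρ hρ0 hρ1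
  have hμ : (fun x y z => μ x y z) = fun x y z => goldenMul (goldenMul x y) z := by
    funext x y z
    exact trilinearMap_eq_goldenMul μ e he0 he1 h111 h112 h121 h211 h221 h122 h212 h222 x y z
  refine ⟨(isTotallyAssoc_of_assoc goldenMul_assoc).isTotallyHomAssoc_twist (ρ := ρ) ?_ ?_, ?_⟩
  · intro x y z
    simp only [hρ, goldenConj_goldenMul]
  · intro x y z
    rw [hμt, ← congrFun₃ hμ x y z]
  · simpa only [hμt, hρ, congrFun₃ hμ] using exists_goldenConj_goldenMul_ne

/-- Twisting the 2-dimensional totally associative ternary algebra by the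
automorphism `ρ(e₁)=e₁`, `ρ(e₂)=e₁-e₂` gives a totally hom-associative ternary
algebra which is NOT totally associative. -/
theorem stmt19 {K : Type*} [Field K] [CharZero K]
    (μ : (K × K) →ₗ[K] (K × K) →ₗ[K] (K × K) →ₗ[K] (K × K))
    (e : Fin 2 → K × K) (he0 : e 0 = (1, 0)) (he1 : e 1 = (0, 1))
    (h111 : μ (e 0) (e 0) (e 0) = e 0)
    (h112 : μ (e 0) (e 0) (e 1) = e 1)
    (h121 : μ (e 0) (e 1) (e 0) = e 1)
    (h211 : μ (e 1) (e 0) (e 0) = e 1)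
    (h221 : μ (e 1) (e 1) (e 0) = e 0 + e 1)
    (h122 : μ (e 0) (e 1) (e 1) = e 0 + e 1)
    (h212 : μ (e 1) (e 0) (e 1) = e 0 + e 1)
    (h222 : μ (e 1) (e 1) (e 1) = e 0 + (2 : K) • e 1)
    (ρ : (K × K) →ₗ[K] (K × K))
    (hρ0 : ρ (e 0) = e 0) (hρ1 : ρ (e 1) = e 0 - e 1)
    (μt : (K × K) → (K × K) → (K × K) → (K × K))
    (hμt : ∀ x y z : K × K, μt x y z = ρ (μ x y z)) :
    (∀ x₁ x₂ x₃ x₄ x₅ : K × K,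
      μt (μt x₁ x₂ x₃) (ρ x₄) (ρ x₅) = μt (ρ x₁) (μt x₂ x₃ x₄) (ρ x₅) ∧
      μt (ρ x₁) (μt x₂ x₃ x₄) (ρ x₅) = μt (ρ x₁) (ρ x₂) (μt x₃ x₄ x₅)) ∧
    (∃ x₁ x₂ x₃ x₄ x₅ : K × K,
      μt (μt x₁ x₂ x₃) x₄ x₅ ≠ μt x₁ (μt x₂ x₃ x₄) x₅) :=
  stmt19_general μ e he0 he1 h111 h112 h121 h211 h221 h122 h212 h222 ρ hρ0 hρ1 μt hμt
end
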